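/- Fix N ≥ 1 and 0 < ε < 1/2, and define the family of distributions P_{XYZ|ABC} on triples (x,y,z) ∈ {+1,−1}³, constant in the settings (a,b,c), which assigns probability ε to (−1,−1,−1), probability 1−ε to (+1,+1,+1), and probability 0 to every other triple. Then this family satisfies all the non-signalling conditions, its chained-Bell quantity satisfies I_N = 1, its bias satisfies ν_N = 1/2 − ε, and the variational distance between the conditional distribution P_{Z|X=−1} and P_Z equals 1 − ε, which equals I_N/2 + ν_N. Hence the bound D(P_{Z|a,b,c,X=x}, P_{Z|a,b,c}) ≤ I_N/2 + ν_N is tight. -/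

import Mathlib

noncomputable section

open Finset

/-- The two outcomes `+1` and `-1`. -/
def pm : Finset ℤ := {1, -1}

/-- Settings on side A: `{0, 2, 4, …, 2N-2}`. -/
def SA (N : ℕ) : Finset ℕ := (Finset.range N).image (fun k => 2 * k)

/-- Settings on side B: `{1, 3, 5, …, 2N-1}`. -/
def SB (N : ℕ) : Finset ℕ := (Finset.range N).image (fun k => 2 * k + 1)

section
variable {C : Type}

/-- Marginal distribution of `(X, Y)` given settings `(a, b, c)` (here `z ∈ {+1,-1}`). -/
def PXY (P : ℕ → ℕ → C → ℤ → ℤ → ℤ → ℝ) (a b : ℕ) (c : C) (x y : ℤ) : ℝ :=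
  ∑ z ∈ pm, P a b c x y z

/-- Marginal distribution of `(X, Z)` given settings `(a, b, c)`. -/
def PXZ (P : ℕ → ℕ → C → ℤ → ℤ → ℤ → ℝ) (a b : ℕ) (c : C) (x z : ℤ) : ℝ :=
  ∑ y ∈ pm, P a b c x y z

/-- Marginal distribution of `(Y, Z)` given settings `(a, b, c)`. -/
def PYZ (P : ℕ → ℕ → C → ℤ → ℤ → ℤ → ℝ) (a b : ℕ) (c : C) (y z : ℤ) : ℝ :=
  ∑ x ∈ pm, P a b c x y z

/-- Marginal distribution of `X` given settings `(a, b, c)`. -/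
def PX (P : ℕ → ℕ → C → ℤ → ℤ → ℤ → ℝ) (a b : ℕ) (c : C) (x : ℤ) : ℝ :=
  ∑ y ∈ pm, ∑ z ∈ pm, P a b c x y z

/-- Marginal distribution of `Z` given settings `(a, b, c)`. -/
def PZ (P : ℕ → ℕ → C → ℤ → ℤ → ℤ → ℝ) (a b : ℕ) (c : C) (z : ℤ) : ℝ :=
  ∑ x ∈ pm, ∑ y ∈ pm, P a b c x y z

/-- Conditional distribution of `Z` given settings `(a, b, c)` and outcome `X = x`. -/
def PZcond (P : ℕ → ℕ → C → ℤ → ℤ → ℤ → ℝ) (a b : ℕ) (c : C) (x z : ℤ) : ℝ :=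
  (∑ y ∈ pm, P a b c x y z) / PX P a b c x

/-- Probability that `X = Y` given settings `(a, b, c)`. -/
def Pagree (P : ℕ → ℕ → C → ℤ → ℤ → ℤ → ℝ) (a b : ℕ) (c : C) : ℝ :=
  PXY P a b c 1 1 + PXY P a b c (-1) (-1)

/-- Probability that `X ≠ Y` given settings `(a, b, c)`. -/
def Pdiff (P : ℕ → ℕ → C → ℤ → ℤ → ℤ → ℝ) (a b : ℕ) (c : C) : ℝ :=
  PXY P a b c 1 (-1) + PXY P a b c (-1) 1

/-- Chained-Bell quantity `I_N` of the two-party marginal, computed at setting `c`. -/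
def IN (P : ℕ → ℕ → C → ℤ → ℤ → ℤ → ℝ) (N : ℕ) (c : C) : ℝ :=
  Pagree P 0 (2 * N - 1) c +
    ∑ p ∈ (SA N ×ˢ SB N).filter (fun p => p.1 + 1 = p.2 ∨ p.2 + 1 = p.1),
      Pdiff P p.1 p.2 c

/-- Bias `ν_N`: maximum over `a` of the variational distance between the marginal of `X`
given setting `a` and the uniform distribution on `{+1, -1}`. -/
def biasN (P : ℕ → ℕ → C → ℤ → ℤ → ℤ → ℝ) (N : ℕ) (b : ℕ) (c : C) : ℝ :=
  ⨆ a ∈ SA N, (1 / 2) * (|PX P a b c 1 - 1 / 2| + |PX P a b c (-1) - 1 / 2|)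

end

/-- The distribution on triples `(x, y, z) ∈ {+1,-1}³` assigning probability `ε` to
`(-1,-1,-1)`, probability `1 - ε` to `(+1,+1,+1)` and `0` to every other triple,
viewed as a family constant in the settings `(a, b, c)`. -/
def Ptight (C : Type) (ε : ℝ) : ℕ → ℕ → C → ℤ → ℤ → ℤ → ℝ :=
  fun _ _ _ x y z =>
    if x = -1 ∧ y = -1 ∧ z = -1 then ε
    else if x = 1 ∧ y = 1 ∧ z = 1 then 1 - ε
    else 0

/-! In `Ptight` the three outcomes always coincide and the family ignores the settings, so it is
trivially non-signalling. Since `X = Y`, only the agreement term of `I_N` survives, giving `I_N = 1`,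
and `X` has the marginal `(1 - ε, ε)`, at distance `1/2 - ε` from uniform. Conditioning on the rare
outcome `X = -1` forces `Z = -1`, which moves `Z` from `(1 - ε, ε)` to `(0, 1)`, a distance of
`1 - ε = I_N/2 + ν_N`. -/

theorem sum_pm {M : Type*} [AddCommMonoid M] (f : ℤ → M) : ∑ z ∈ pm, f z = f 1 + f (-1) := by
  simp [pm]

/-- In `ℝ` a bounded supremum over a non-member is `sSup ∅ = 0`, hence the hypothesis `0 ≤ v`. -/
theorem Real.biSup_finset_eq_of_forall {ι : Type*} {s : Finset ι} (hs : s.Nonempty) {f : ι → ℝ}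
    {v : ℝ} (hv : 0 ≤ v) (hf : ∀ a ∈ s, f a = v) : ⨆ a ∈ s, f a = v := by
  have hle : ∀ a, ⨆ _ : a ∈ s, f a ≤ v := fun a => Real.iSup_le (fun ha => (hf a ha).le) hv
  obtain ⟨a, ha⟩ := hs
  refine le_antisymm (Real.iSup_le hle hv) ?_
  calc v = ⨆ _ : a ∈ s, f a := by rw [ciSup_pos ha, hf a ha]
    _ ≤ ⨆ a ∈ s, f a := le_ciSup ⟨v, by rintro _ ⟨a, rfl⟩; exact hle a⟩ a

theorem zero_mem_SA {N : ℕ} (hN : 1 ≤ N) : 0 ∈ SA N :=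
  Finset.mem_image.mpr ⟨0, Finset.mem_range.mpr hN, rfl⟩

section Ptight

variable {C : Type} {ε : ℝ} (a b : ℕ) (c : C)

theorem PX_Ptight_one : PX (Ptight C ε) a b c 1 = 1 - ε := by
  simp only [PX, sum_pm]
  simp [Ptight]

theorem PX_Ptight_neg_one : PX (Ptight C ε) a b c (-1) = ε := by
  simp only [PX, sum_pm]
  simp [Ptight]

theorem PZ_Ptight_one : PZ (Ptight C ε) a b c 1 = 1 - ε := by
  simp only [PZ, sum_pm]
  simp [Ptight]

theorem PZ_Ptight_neg_one : PZ (Ptight C ε) a b c (-1) = ε := by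
  simp only [PZ, sum_pm]
  simp [Ptight]

theorem PZcond_Ptight_neg_one_one : PZcond (Ptight C ε) a b c (-1) 1 = 0 := by
  simp only [PZcond, sum_pm]
  simp [Ptight]

theorem PZcond_Ptight_neg_one_neg_one (hε : ε ≠ 0) : PZcond (Ptight C ε) a b c (-1) (-1) = 1 := by
  simp only [PZcond, PX, sum_pm]
  simp [Ptight, hε]

theorem Pagree_Ptight : Pagree (Ptight C ε) a b c = 1 := by
  simp only [Pagree, PXY, sum_pm]
  simp [Ptight]

theorem Pdiff_Ptight : Pdiff (Ptight C ε) a b c = 0 := by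
  simp only [Pdiff, PXY, sum_pm]
  simp [Ptight]

theorem IN_Ptight (N : ℕ) : IN (Ptight C ε) N c = 1 := by
  rw [IN, Pagree_Ptight, Finset.sum_eq_zero fun p _ => Pdiff_Ptight p.1 p.2 c, add_zero]

theorem biasN_Ptight {N : ℕ} (hN : 1 ≤ N) (hε : ε ≤ 1 / 2) :
    biasN (Ptight C ε) N b c = 1 / 2 - ε := by
  refine Real.biSup_finset_eq_of_forall ⟨0, zero_mem_SA hN⟩ (by linarith) fun a _ => ?_
  rw [PX_Ptight_one, PX_Ptight_neg_one, abs_of_nonneg (by linarith), abs_of_nonpos (by linarith)]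
  ring

theorem dist_PZcond_neg_one_PZ_Ptight (hε0 : ε ≠ 0) (hε1 : ε ≤ 1) :
    (1 / 2) * ∑ z ∈ pm, |PZcond (Ptight C ε) a b c (-1) z - PZ (Ptight C ε) a b c z| = 1 - ε := by
  rw [sum_pm, PZcond_Ptight_neg_one_one, PZcond_Ptight_neg_one_neg_one a b c hε0, PZ_Ptight_one,
    PZ_Ptight_neg_one, abs_of_nonpos (by linarith), abs_of_nonneg (by linarith)]
  ring

end Ptight

/-- **tightness.** The family `Ptight` is non-signalling, has `I_N = 1`,
bias `ν_N = 1/2 - ε`, and `D(P_{Z|X=-1}, P_Z) = 1 - ε = I_N/2 + ν_N`.  Hence the bound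
`D(P_{Z|a,b,c,X=x}, P_{Z|a,b,c}) ≤ I_N/2 + ν_N` is tight. -/
theorem statement6 {C : Type} (N : ℕ) (hN : 1 ≤ N) (ε : ℝ) (hε0 : 0 < ε)
    (hε : ε < 1 / 2) :
    (∀ (a b : ℕ) (c c' : C) (x y : ℤ),
      PXY (Ptight C ε) a b c x y = PXY (Ptight C ε) a b c' x y) ∧
    (∀ (a b b' : ℕ) (c : C) (x z : ℤ),
      PXZ (Ptight C ε) a b c x z = PXZ (Ptight C ε) a b' c x z) ∧
    (∀ (a a' b : ℕ) (c : C) (y z : ℤ),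
      PYZ (Ptight C ε) a b c y z = PYZ (Ptight C ε) a' b c y z) ∧
    (∀ c : C, IN (Ptight C ε) N c = 1) ∧
    (∀ (b : ℕ) (c : C), biasN (Ptight C ε) N b c = 1 / 2 - ε) ∧
    (∀ (a b : ℕ) (c : C),
      (1 / 2) * ∑ z ∈ pm,
          |PZcond (Ptight C ε) a b c (-1) z - PZ (Ptight C ε) a b c z| = 1 - ε) ∧
    (∀ (a b : ℕ) (c : C),
      (1 / 2) * ∑ z ∈ pm,
          |PZcond (Ptight C ε) a b c (-1) z - PZ (Ptight C ε) a b c z| =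
        IN (Ptight C ε) N c / 2 + biasN (Ptight C ε) N b c) := by
  have hD := fun a b c => dist_PZcond_neg_one_PZ_Ptight (C := C) a b c hε0.ne' (by linarith)
  refine ⟨fun _ _ _ _ _ _ => rfl, fun _ _ _ _ _ _ => rfl, fun _ _ _ _ _ _ => rfl,
    fun c => IN_Ptight c N, fun b c => biasN_Ptight b c hN hε.le, hD, fun a b c => ?_⟩
  rw [hD, IN_Ptight, biasN_Ptight b c hN hε.le]
  ring
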